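/- arXiv:1712.03270 — 4 statements merged into one kernel-verified Lean document; each statement's English description precedes it below -/
import Mathlib

section
/- Let f : [0,1] → M be a map of the unit interval (with its Euclidean topology) into Minkowski space M which is continuous with respect to the Fine topology F and strictly ≪-preserving (s < t implies f(s) ≪ f(t)). Then the image of f is a piecewise linear path consisting of a finite number of intervals along time axes: there exist n ∈ ℕ and a partition 0 = t_0 < t_1 < ... < t_n = 1 such that for each i ∈ {1, ..., n}, the image f([t_{i−1}, t_i]) is contained in some time axis. -/
/-!
Fix `s ∈ [0, 1]` and consider the directions of the chords `f t - f s`, rescaled to time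
component `1`. If they took infinitely many values on every punctured neighbourhood of `s`, one
could choose `tₙ → s` with the points `f tₙ` pairwise non-collinear with `f s`. Such a set meets
every axis in finitely many points (a time axis through `f s` in at most one, a space axis through
`f s` in none, since all `f tₙ` are timelike to `f s`, and any other axis is Euclidean-closed, so
it misses a tail of the sequence). Hence it is Fine-closed, which contradicts Fine-continuity at
`s`. So the direction takes finitely many values, and by connectedness is constant, on each side
of `s` close to `s`: every point has one-sided neighbourhoods mapped into time axes, and a
supremum argument over `[0, 1]` assembles finitely many such pieces.
-/

noncomputable section

open TopologicalSpace Filter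

/-- Minkowski space `M = ℝ × ℝ³`. -/
abbrev Mink : Type := ℝ × EuclideanSpace ℝ (Fin 3)

/-- The Euclidean (product) topology on `M`. -/
def TE : TopologicalSpace Mink := inferInstance

/-- Time difference Δt(x,y). -/
def dtime (x y : Mink) : ℝ := y.1 - x.1

/-- Spatial distance Δr(x,y). -/
def dspace (x y : Mink) : ℝ := ‖y.2 - x.2‖

/-- Chronological order `x ≪ y`. -/
def Chron (x y : Mink) : Prop := dspace x y < dtime x y

/-- Causal order `x ≺ y`. -/
def Causal (x y : Mink) : Prop := dspace x y ≤ dtime x y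

/-- Euclidean open ball of radius ε about x. -/
def eball (x : Mink) (ε : ℝ) : Set Mink :=
  {y | Real.sqrt ((y.1 - x.1) ^ 2 + ‖y.2 - x.2‖ ^ 2) < ε}

/-- Time cone `C^T(x)`. -/
def timeCone (x : Mink) : Set Mink := {x} ∪ {y | Chron x y ∨ Chron y x}

/-- Space cone `C^S(x)`. -/
def spaceCone (x : Mink) : Set Mink := {x} ∪ {y | |dtime x y| < dspace x y}

/-- Light cone `C^L(x)`. -/
def lightCone (x : Mink) : Set Mink := {y | y ≠ x ∧ |dtime x y| = dspace x y}

/-- Causal cone `C^J(x)`. -/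
def causalCone (x : Mink) : Set Mink := {x} ∪ {y | Causal x y ∨ Causal y x}

/-- Closed space cone `K^S(x)` (space cone together with the light cone). -/
def closedSpaceCone (x : Mink) : Set Mink := {x} ∪ {y | |dtime x y| ≤ dspace x y}

/-- Bounded time cones, the defining family of `Z^T`. -/
def BasisT : Set (Set Mink) := {S | ∃ x ε, 0 < ε ∧ S = timeCone x ∩ eball x ε}

/-- Bounded space cones, the defining family of `Z^S`. -/
def BasisS : Set (Set Mink) := {S | ∃ x ε, 0 < ε ∧ S = spaceCone x ∩ eball x ε}

/-- Balls with the light cone of the centre removed, the defining family of `Z`. -/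
def BasisZ : Set (Set Mink) := {S | ∃ x ε, 0 < ε ∧ S = eball x ε \ lightCone x}

/-- Zeeman's topology `Z^T` (the Minkowski analogue of the path topology). -/
def ZT : TopologicalSpace Mink := TopologicalSpace.generateFrom BasisT

/-- The topology `Z^S`. -/
def ZS : TopologicalSpace Mink := TopologicalSpace.generateFrom BasisS

/-- The topology `Z`. -/
def Ztop : TopologicalSpace Mink := TopologicalSpace.generateFrom BasisZ

def Jplus (x : Mink) : Set Mink := {y | Causal x y}
def Jminus (x : Mink) : Set Mink := {y | Causal y x}
def Nplus (x : Mink) : Set Mink := {y | y ≠ x ∧ dtime x y = dspace x y}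
def Nminus (x : Mink) : Set Mink := {y | y ≠ x ∧ -dtime x y = dspace x y}

/-- The interval topology `T^tc` whose subbasic open sets are time cones. -/
def Ttc : TopologicalSpace Mink :=
  TopologicalSpace.generateFrom {S | ∃ x, S = timeCone x}

/-- The interval topology `T^≪` of the irreflexive causal order. -/
def Tll : TopologicalSpace Mink :=
  TopologicalSpace.generateFrom
    ({S | ∃ x, S = Set.univ \ (Jplus x \ {x})} ∪ {S | ∃ x, S = Set.univ \ (Jminus x \ {x})})

/-- The interval topology `T^→` of irreflexive horismos. -/
def Thor : TopologicalSpace Mink :=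
  TopologicalSpace.generateFrom
    ({S | ∃ x, S = Set.univ \ Nplus x} ∪ {S | ∃ x, S = Set.univ \ Nminus x})

/-- The topology `(Z^T)′` generated by bounded causal cones. -/
def ZT' : TopologicalSpace Mink :=
  TopologicalSpace.generateFrom {S | ∃ x ε, 0 < ε ∧ S = causalCone x ∩ eball x ε}

/-- The topology `(Z^S)′` generated by bounded closed space cones. -/
def ZS' : TopologicalSpace Mink :=
  TopologicalSpace.generateFrom {S | ∃ x ε, 0 < ε ∧ S = closedSpaceCone x ∩ eball x ε}

/-- The topology `(T^tc)′` generated by causal cones. -/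
def Ttc' : TopologicalSpace Mink :=
  TopologicalSpace.generateFrom {S | ∃ x, S = causalCone x}

/-- The topology `(T^≪)′` generated by closed space cones. -/
def Tll' : TopologicalSpace Mink :=
  TopologicalSpace.generateFrom {S | ∃ x, S = closedSpaceCone x}

/-- An endless causal curve. -/
def EndlessCausalCurve (γ : ℝ → Mink) : Prop :=
  Continuous γ ∧ (∀ s t : ℝ, s < t → Causal (γ s) (γ t) ∧ γ s ≠ γ t) ∧
    (∀ c : ℝ, ∃ t, c < (γ t).1) ∧ (∀ c : ℝ, ∃ t, (γ t).1 < c)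

/-- `γ` is a `T`-limit curve of the sequence `γs` of curves. -/
def IsLimitCurve (T : TopologicalSpace Mink) (γ : ℝ → Mink) (γs : ℕ → ℝ → Mink) : Prop :=
  ∃ nk : ℕ → ℕ, StrictMono nk ∧
    ∀ p ∈ Set.range γ, ∃ pk : ℕ → Mink,
      (∀ k, pk k ∈ Set.range (γs (nk k))) ∧ Filter.Tendsto pk Filter.atTop (@nhds Mink T p)

/-- The Minkowski quadratic form `q(v) = v₀² − ‖v⃗‖²`. -/
def qform (v : Mink) : ℝ := v.1 ^ 2 - ‖v.2‖ ^ 2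

/-- `S` is a time axis: a line `{a + t • v}` with `v` timelike. -/
def IsTimeAxis (S : Set Mink) : Prop :=
  ∃ a v : Mink, ‖v.2‖ < |v.1| ∧ S = {p | ∃ t : ℝ, p = a + t • v}

/-- `S` is a space axis: an affine subspace `a + Λ({0} × ℝ³)` with `Λ` preserving `q`. -/
def IsSpaceAxis (S : Set Mink) : Prop :=
  ∃ (a : Mink) (Λ : Mink →ₗ[ℝ] Mink), (∀ v, qform (Λ v) = qform v) ∧
    S = (fun w => a + Λ w) '' {v : Mink | v.1 = 0}

/-- `T` induces on every time axis and every space axis the same subspace topology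
as the Euclidean topology. -/
def AxesProperty (T : TopologicalSpace Mink) : Prop :=
  ∀ S : Set Mink, IsTimeAxis S ∨ IsSpaceAxis S →
    TopologicalSpace.induced (Subtype.val : S → Mink) T =
      TopologicalSpace.induced (Subtype.val : S → Mink) TE

/-- Zeeman's Fine topology `F`: the finest topology inducing the Euclidean subspace
topology on every time axis and on every space axis.  (In Mathlib's order on
topologies, finer means smaller, so this is the infimum.) -/
def Fine : TopologicalSpace Mink := sInf {T : TopologicalSpace Mink | AxesProperty T}

open Set Topology Function

lemma qform_smul (c : ℝ) (w : Mink) : qform (c • w) = c ^ 2 * qform w := by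
  simp only [qform, Prod.smul_fst, Prod.smul_snd, smul_eq_mul, norm_smul, Real.norm_eq_abs]
  rw [mul_pow, mul_pow, sq_abs]
  ring

lemma qform_neg (w : Mink) : qform (-w) = qform w := by
  simp [qform]

lemma qform_pos_iff {w : Mink} : 0 < qform w ↔ ‖w.2‖ < |w.1| := by
  rw [qform, sub_pos, sq_lt_sq, abs_norm]

lemma fst_ne_zero_of_qform_pos {w : Mink} (h : 0 < qform w) : w.1 ≠ 0 := by
  intro h0
  rw [qform_pos_iff, h0, abs_zero] at h
  exact (norm_nonneg _).not_gt h

lemma Chron.qform_sub_pos {x y : Mink} (h : Chron x y) : 0 < qform (y - x) :=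
  qform_pos_iff.2 (by simpa [Chron, dspace, dtime] using h.trans_le (le_abs_self _))

def normalizeTime (w : Mink) : Mink := w.1⁻¹ • w

lemma normalizeTime_smul {c : ℝ} (hc : c ≠ 0) (w : Mink) :
    normalizeTime (c • w) = normalizeTime w := by
  rw [normalizeTime, normalizeTime, Prod.smul_fst, smul_eq_mul, smul_smul, mul_inv,
    mul_assoc, mul_left_comm, inv_mul_cancel₀ hc, mul_one]

lemma fst_smul_normalizeTime {w : Mink} (h : w.1 ≠ 0) : w.1 • normalizeTime w = w := by
  rw [normalizeTime, smul_smul, mul_inv_cancel₀ h, one_smul]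

lemma qform_normalizeTime_pos {w : Mink} (h : 0 < qform w) : 0 < qform (normalizeTime w) := by
  rw [normalizeTime, qform_smul]
  exact mul_pos (sq_pos_of_ne_zero (inv_ne_zero (fst_ne_zero_of_qform_pos h))) h

lemma continuousOn_normalizeTime : ContinuousOn normalizeTime {w : Mink | w.1 ≠ 0} :=
  (continuous_fst.continuousOn.inv₀ fun _ hw => hw).smul continuousOn_id

lemma IsTimeAxis.exists_sub_eq_smul {S : Set Mink} (hS : IsTimeAxis S) {x y z : Mink}
    (hx : x ∈ S) (hy : y ∈ S) (hz : z ∈ S) (hyx : y ≠ x) : ∃ c : ℝ, z - x = c • (y - x) := by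
  obtain ⟨a, v, -, rfl⟩ := hS
  obtain ⟨⟨r, rfl⟩, ⟨r₁, rfl⟩, ⟨r₂, rfl⟩⟩ := And.intro hx (And.intro hy hz)
  have hr : r₁ - r ≠ 0 := fun h => hyx (by rw [sub_eq_zero.1 h])
  refine ⟨(r₂ - r) / (r₁ - r), ?_⟩
  rw [add_sub_add_left_eq_sub, add_sub_add_left_eq_sub, ← sub_smul, ← sub_smul, smul_smul,
    div_mul_cancel₀ _ hr]

lemma IsSpaceAxis.qform_sub_nonpos {S : Set Mink} (hS : IsSpaceAxis S) {x y : Mink}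
    (hx : x ∈ S) (hy : y ∈ S) : qform (y - x) ≤ 0 := by
  obtain ⟨a, Λ, hΛ, rfl⟩ := hS
  obtain ⟨⟨w, hw, rfl⟩, ⟨w', hw', rfl⟩⟩ := And.intro hx hy
  rw [add_sub_add_left_eq_sub, ← map_sub, hΛ, qform, Prod.fst_sub, hw, hw', sub_zero]
  nlinarith [sq_nonneg ‖(w' - w).2‖]

lemma IsTimeAxis.isClosed {S : Set Mink} (hS : IsTimeAxis S) : IsClosed S := by
  obtain ⟨a, v, -, rfl⟩ := hS
  have : {p : Mink | ∃ t : ℝ, p = a + t • v} = AffineSubspace.mk' a (Submodule.span ℝ {v}) := by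
    ext p
    simp [Submodule.mem_span_singleton, eq_sub_iff_add_eq', eq_comm]
  rw [this]
  exact AffineSubspace.closed_of_finiteDimensional _

lemma IsSpaceAxis.isClosed {S : Set Mink} (hS : IsSpaceAxis S) : IsClosed S := by
  obtain ⟨a, Λ, -, rfl⟩ := hS
  have : (fun w => a + Λ w) '' {v : Mink | v.1 = 0} = AffineSubspace.mk' a
      ((LinearMap.ker (LinearMap.fst ℝ ℝ (EuclideanSpace ℝ (Fin 3)))).map Λ) := by
    ext p
    simp [eq_sub_iff_add_eq']
  rw [this]
  exact AffineSubspace.closed_of_finiteDimensional _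

lemma fine_le_TE : Fine ≤ TE := sInf_le fun _ _ => rfl

lemma isClosed_fine_of_finite_inter_axes {P : Set Mink}
    (hP : ∀ S, IsTimeAxis S ∨ IsSpaceAxis S → (P ∩ S).Finite) : IsClosed[Fine] P := by
  -- Adjoining `Pᶜ` to the Euclidean open sets keeps the axes property, since finite subsets of an
  -- axis are Euclidean-closed in it; `Fine` is finer than any such topology.
  have hT : AxesProperty (generateFrom (insert Pᶜ {U | IsOpen U})) := by
    intro S hS
    refine le_antisymm (induced_mono fun U hU => GenerateOpen.basic _ (Or.inr hU)) ?_
    rw [induced_generateFrom_eq]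
    refine le_generateFrom ?_
    rintro _ ⟨U, rfl | hU, rfl⟩
    · have : ((Subtype.val : S → Mink) ⁻¹' P).Finite := by
        rw [← Subtype.preimage_coe_inter_self]
        exact (hP S hS).preimage Subtype.val_injective.injOn
      exact this.isClosed.isOpen_compl
    · exact isOpen_induced hU
  have hle : Fine ≤ generateFrom (insert Pᶜ {U | IsOpen U}) := sInf_le hT
  exact @IsClosed.mk _ Fine _ (hle _ (GenerateOpen.basic _ (mem_insert _ _)))

lemma exists_seq_mem_tendsto_injective_comp {α β : Type*} {l : Filter α} [l.IsCountablyGenerated]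
    {g : α → β} {s : Set α} (hs : s ∈ l) (h : ∀ A ∈ l, (g '' A).Infinite) :
    ∃ t : ℕ → α, (∀ n, t n ∈ s) ∧ Tendsto t atTop l ∧ Injective (g ∘ t) := by
  classical
  obtain ⟨B, hB⟩ := l.exists_antitone_basis
  obtain ⟨φ, hφB, hφ⟩ := exists_seq_of_forall_finset_exists (fun p : ℕ × α => p.2 ∈ B p.1 ∩ s)
    (fun p q => p.1 < q.1 ∧ g p.2 ≠ g q.2) fun F _ => by
      obtain ⟨_, ⟨b, hb, rfl⟩, hbF⟩ := ((h _ (inter_mem (hB.mem (F.sup Prod.fst + 1)) hs)).sdiff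
        (F.finite_toSet.image (g ∘ Prod.snd))).nonempty
      exact ⟨(_, b), hb, fun q hq => ⟨Nat.lt_succ_of_le (F.le_sup hq),
        fun hqb => hbF ⟨q, hq, hqb⟩⟩⟩
  have hφ₁ : StrictMono fun n => (φ n).1 := fun m n hmn => (hφ m n hmn).1
  refine ⟨fun n => (φ n).2, fun n => (hφB n).2,
    hB.tendsto fun n => hB.antitone (hφ₁.id_le n) (hφB n).1, fun m n hmn => ?_⟩
  by_contra hne
  rcases lt_or_gt_of_ne hne with hlt | hlt
  · exact (hφ m n hlt).2 hmn
  · exact (hφ n m hlt).2 hmn.symm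

lemma not_tendsto_fine_of_pairwise_noncollinear {x : Mink} {p : ℕ → Mink}
    (htime : ∀ n, 0 < qform (p n - x))
    (hcol : Pairwise fun m n => ∀ c : ℝ, p n - x ≠ c • (p m - x)) :
    ¬Tendsto p atTop (@nhds Mink Fine x) := by
  intro hp
  have hpx : ∀ n, p n ≠ x := fun n h => by simpa [h, qform] using htime n
  have hpE : Tendsto p atTop (𝓝 x) := hp.mono_right (nhds_mono fine_le_TE)
  have hfin : ∀ S, IsTimeAxis S ∨ IsSpaceAxis S → {n | p n ∈ S}.Finite := by
    intro S hS
    by_cases hxS : x ∈ S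
    · rcases hS with hS | hS
      · refine Set.Subsingleton.finite fun m hm n hn => by_contra fun hmn => ?_
        obtain ⟨c, hc⟩ := hS.exists_sub_eq_smul hxS hm hn (hpx m)
        exact hcol hmn c hc
      · exact Set.finite_empty.subset fun n hn => (htime n).not_ge (hS.qform_sub_nonpos hxS hn)
    · have hSc : IsClosed S := hS.elim IsTimeAxis.isClosed IsSpaceAxis.isClosed
      have := hpE.eventually (hSc.isOpen_compl.mem_nhds hxS)
      rw [← Nat.cofinite_eq_atTop] at this
      simpa using this
  have hclosed : IsClosed[Fine] (range p) := isClosed_fine_of_finite_inter_axes fun S hS =>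
    ((hfin S hS).image p).subset (by rintro _ ⟨⟨n, rfl⟩, hn⟩; exact ⟨n, hn, rfl⟩)
  have hx : x ∈ (range p)ᶜ := fun ⟨n, hn⟩ => hpx n hn
  obtain ⟨n, hn⟩ := (hp.eventually_mem (@IsOpen.mem_nhds _ Fine _ _ hclosed.isOpen_compl hx)).exists
  exact hn ⟨n, rfl⟩

lemma exists_timeAxis_of_finite_normalizeTime {X : Type*} [TopologicalSpace X] {f : X → Mink}
    {x : Mink} {I : Set X} (hI : IsPreconnected I) (hIne : I.Nonempty) (hf : ContinuousOn f I)
    (htime : ∀ t ∈ I, 0 < qform (f t - x))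
    (hfin : ((fun t => normalizeTime (f t - x)) '' I).Finite) :
    ∃ S, IsTimeAxis S ∧ insert x (f '' I) ⊆ S := by
  obtain ⟨t₀, ht₀⟩ := hIne
  have hcont : ContinuousOn (fun t => normalizeTime (f t - x)) I :=
    continuousOn_normalizeTime.comp (hf.sub continuousOn_const) fun t ht =>
      fst_ne_zero_of_qform_pos (htime t ht)
  have hconst : ∀ t ∈ I, normalizeTime (f t - x) = normalizeTime (f t₀ - x) := fun t ht =>
    hI.constant_of_mapsTo hfin.isDiscrete hcont (mapsTo_image _ _) ht ht₀
  refine ⟨{p | ∃ r : ℝ, p = x + r • normalizeTime (f t₀ - x)},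
    ⟨x, _, qform_pos_iff.1 (qform_normalizeTime_pos (htime t₀ ht₀)), rfl⟩, ?_⟩
  rintro _ (rfl | ⟨t, ht, rfl⟩)
  · exact ⟨0, by rw [zero_smul, add_zero]⟩
  · refine ⟨(f t - x).1, ?_⟩
    rw [← hconst t ht, fst_smul_normalizeTime (fst_ne_zero_of_qform_pos (htime t ht)),
      add_sub_cancel]

lemma qform_sub_pos_of_chron_preserving {f : ℝ → Mink}
    (horder : ∀ s ∈ Icc (0 : ℝ) 1, ∀ t ∈ Icc (0 : ℝ) 1, s < t → Chron (f s) (f t))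
    {s t : ℝ} (hs : s ∈ Icc (0 : ℝ) 1) (ht : t ∈ Icc (0 : ℝ) 1) (hts : t ≠ s) :
    0 < qform (f t - f s) := by
  rcases hts.lt_or_gt with h | h
  · rw [← neg_sub, qform_neg]
    exact (horder t ht s hs h).qform_sub_pos
  · exact (horder s hs t ht h).qform_sub_pos

lemma exists_mem_nhdsWithin_finite_normalizeTime {f : ℝ → Mink}
    (hcont : @Continuous (Icc (0 : ℝ) 1) Mink _ Fine (fun s => f s.1))
    (horder : ∀ s ∈ Icc (0 : ℝ) 1, ∀ t ∈ Icc (0 : ℝ) 1, s < t → Chron (f s) (f t))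
    {s : ℝ} (hs : s ∈ Icc (0 : ℝ) 1) :
    ∃ V ∈ 𝓝[Icc 0 1 \ {s}] s, ((fun t => normalizeTime (f t - f s)) '' V).Finite := by
  by_contra! h
  obtain ⟨t, htA, ht, hinj⟩ := exists_seq_mem_tendsto_injective_comp self_mem_nhdsWithin h
  have htime n : 0 < qform (f (t n) - f s) :=
    qform_sub_pos_of_chron_preserving horder hs (htA n).1 (htA n).2
  refine not_tendsto_fine_of_pairwise_noncollinear htime (fun m n hmn c hc => hmn (hinj ?_)) ?_
  · have hc0 : c ≠ 0 := by
      rintro rfl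
      simpa [hc, qform] using htime n
    simp only [comp_apply, hc, normalizeTime_smul hc0]
  · exact (@Continuous.tendsto _ _ _ Fine _ hcont ⟨s, hs⟩).comp
      ((tendsto_subtype_rng (f := fun n => (⟨t n, (htA n).1⟩ : Icc (0 : ℝ) 1))).2
        (tendsto_nhds_of_tendsto_nhdsWithin ht))

lemma exists_timeAxis_image_insert {f : ℝ → Mink}
    (hcont : @Continuous (Icc (0 : ℝ) 1) Mink _ Fine (fun s => f s.1))
    (horder : ∀ s ∈ Icc (0 : ℝ) 1, ∀ t ∈ Icc (0 : ℝ) 1, s < t → Chron (f s) (f t))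
    {s : ℝ} (hs : s ∈ Icc (0 : ℝ) 1) :
    ∃ V ∈ 𝓝[Icc 0 1 \ {s}] s, ∀ I ⊆ V, IsPreconnected I → I.Nonempty →
      ∃ S, IsTimeAxis S ∧ f '' insert s I ⊆ S := by
  obtain ⟨V, hV, hfin⟩ := exists_mem_nhdsWithin_finite_normalizeTime hcont horder hs
  have hfE : ContinuousOn f (Icc 0 1) :=
    continuousOn_iff_continuous_domRestrict.2 (continuous_le_rng fine_le_TE hcont)
  refine ⟨V ∩ (Icc 0 1 \ {s}), inter_mem hV self_mem_nhdsWithin, fun I hIV hI hIne => ?_⟩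
  rw [image_insert_eq]
  exact exists_timeAxis_of_finite_normalizeTime hI hIne (hfE.mono fun t ht => (hIV ht).2.1)
    (fun t ht => qform_sub_pos_of_chron_preserving horder hs (hIV ht).2.1 (hIV ht).2.2)
    (hfin.subset (image_mono fun t ht => (hIV ht).1))

lemma exists_timeAxis_image_Icc_right {f : ℝ → Mink}
    (hcont : @Continuous (Icc (0 : ℝ) 1) Mink _ Fine (fun s => f s.1))
    (horder : ∀ s ∈ Icc (0 : ℝ) 1, ∀ t ∈ Icc (0 : ℝ) 1, s < t → Chron (f s) (f t))
    {s : ℝ} (hs : s ∈ Ico (0 : ℝ) 1) : ∃ y > s, ∃ S, IsTimeAxis S ∧ f '' Icc s y ⊆ S := by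
  obtain ⟨V, hV, hVS⟩ := exists_timeAxis_image_insert hcont horder (Ico_subset_Icc_self hs)
  have hVgt : V ∈ 𝓝[>] s := nhdsWithin_le_of_mem (mem_of_superset (Ioo_mem_nhdsGT hs.2)
    (fun t ht => ⟨⟨hs.1.trans ht.1.le, ht.2.le⟩, ht.1.ne'⟩ : Ioo s 1 ⊆ Icc 0 1 \ {s})) hV
  obtain ⟨y, hsy, hyV⟩ := mem_nhdsGT_iff_exists_Ioc_subset.1 hVgt
  refine ⟨y, hsy, ?_⟩
  rw [← Ioc_insert_left (le_of_lt hsy)]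
  exact hVS _ hyV isPreconnected_Ioc (nonempty_Ioc.2 hsy)

lemma exists_timeAxis_image_Icc_left {f : ℝ → Mink}
    (hcont : @Continuous (Icc (0 : ℝ) 1) Mink _ Fine (fun s => f s.1))
    (horder : ∀ s ∈ Icc (0 : ℝ) 1, ∀ t ∈ Icc (0 : ℝ) 1, s < t → Chron (f s) (f t))
    {s : ℝ} (hs : s ∈ Ioc (0 : ℝ) 1) : ∃ x < s, ∃ S, IsTimeAxis S ∧ f '' Icc x s ⊆ S := by
  obtain ⟨V, hV, hVS⟩ := exists_timeAxis_image_insert hcont horder (Ioc_subset_Icc_self hs)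
  have hVlt : V ∈ 𝓝[<] s := nhdsWithin_le_of_mem (mem_of_superset (Ioo_mem_nhdsLT hs.1)
    (fun t ht => ⟨⟨ht.1.le, ht.2.le.trans hs.2⟩, ht.2.ne⟩ : Ioo 0 s ⊆ Icc 0 1 \ {s})) hV
  obtain ⟨x, hxs, hxV⟩ := mem_nhdsLT_iff_exists_Ico_subset.1 hVlt
  refine ⟨x, hxs, ?_⟩
  rw [← Ico_insert_right (le_of_lt hxs)]
  exact hVS _ hxV isPreconnected_Ico (nonempty_Ico.2 hxs)

def HasPartition (P : ℝ → ℝ → Prop) (a b : ℝ) : Prop :=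
  ∃ (n : ℕ) (τ : Fin (n + 1) → ℝ), StrictMono τ ∧ τ 0 = a ∧ τ (Fin.last n) = b ∧
    ∀ i : Fin n, P (τ i.castSucc) (τ i.succ)

lemma hasPartition_refl (P : ℝ → ℝ → Prop) (a : ℝ) : HasPartition P a a :=
  ⟨0, fun _ => a, Subsingleton.strictMono (α := Fin 1) _, rfl, rfl, Fin.elim0⟩

lemma HasPartition.snoc {P : ℝ → ℝ → Prop} {a b c : ℝ} (h : HasPartition P a b) (hbc : b < c)
    (hP : P b c) : HasPartition P a c := by
  obtain ⟨n, τ, hτ, h0, hlast, hτP⟩ := h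
  refine ⟨n + 1, Fin.snoc τ c, Fin.strictMono_iff_lt_succ.2 fun i => ?_, ?_, by simp, fun i => ?_⟩
  · cases i using Fin.lastCases with
    | last => simpa [hlast] using hbc
    | cast j =>
      rw [Fin.succ_castSucc, Fin.snoc_castSucc, Fin.snoc_castSucc]
      exact hτ Fin.castSucc_lt_succ
  · simpa using h0
  · cases i using Fin.lastCases with
    | last => simpa [hlast] using hP
    | cast j =>
      rw [Fin.succ_castSucc, Fin.snoc_castSucc, Fin.snoc_castSucc]
      exact hτP j

lemma hasPartition_of_forall_exists {P : ℝ → ℝ → Prop} {a b : ℝ} (hab : a ≤ b)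
    (hmono : ∀ x y x' y', x ≤ x' → y' ≤ y → P x y → P x' y')
    (hright : ∀ s ∈ Ico a b, ∃ y > s, P s y) (hleft : ∀ s ∈ Ioc a b, ∃ x < s, P x s) :
    HasPartition P a b := by
  set A := {c ∈ Icc a b | HasPartition P a c}
  have haA : a ∈ A := ⟨⟨le_rfl, hab⟩, hasPartition_refl P a⟩
  have hbdd : BddAbove A := ⟨b, fun c hc => hc.1.2⟩
  obtain ⟨hac, hcb⟩ : a ≤ sSup A ∧ sSup A ≤ b :=
    ⟨le_csSup hbdd haA, csSup_le ⟨a, haA⟩ fun c hc => hc.1.2⟩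
  have hcA : HasPartition P a (sSup A) := by
    rcases hac.eq_or_lt with hac | hac
    · exact hac ▸ hasPartition_refl P a
    obtain ⟨x, hxc, hx⟩ := hleft _ ⟨hac, hcb⟩
    obtain ⟨d, hdA, hxd⟩ := exists_lt_of_lt_csSup ⟨a, haA⟩ hxc
    rcases (le_csSup hbdd hdA).eq_or_lt with hdc | hdc
    · exact hdc ▸ hdA.2
    · exact hdA.2.snoc hdc (hmono _ _ _ _ hxd.le le_rfl hx)
  rcases hcb.eq_or_lt with hcb | hcb
  · exact hcb ▸ hcA
  obtain ⟨y, hcy, hy⟩ := hright _ ⟨hac, hcb⟩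
  have hyA : min y b ∈ A := ⟨⟨hac.trans (le_min hcy.le hcb.le), min_le_right _ _⟩,
    hcA.snoc (lt_min hcy hcb) (hmono _ _ _ _ le_rfl (min_le_left _ _) hy)⟩
  exact absurd (le_csSup hbdd hyA) (lt_min hcy hcb).not_ge

/-- Zeeman's Theorem: a Fine-continuous, strictly `≪`-preserving map of the unit interval
into Minkowski space has image a piecewise linear path consisting of finitely many
intervals along time axes. -/
theorem fine_continuous_chron_preserving_piecewise_linear (f : ℝ → Mink)
    (hcont : @Continuous (Set.Icc (0 : ℝ) 1) Mink _ Fine (fun s => f s.1))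
    (horder : ∀ s ∈ Set.Icc (0 : ℝ) 1, ∀ t ∈ Set.Icc (0 : ℝ) 1, s < t → Chron (f s) (f t)) :
    ∃ (n : ℕ) (τ : Fin (n + 1) → ℝ), StrictMono τ ∧ τ 0 = 0 ∧ τ (Fin.last n) = 1 ∧
      ∀ i : Fin n, ∃ S : Set Mink, IsTimeAxis S ∧
        f '' Set.Icc (τ i.castSucc) (τ i.succ) ⊆ S := by
  refine hasPartition_of_forall_exists (P := fun x y => ∃ S, IsTimeAxis S ∧ f '' Icc x y ⊆ S)
    zero_le_one ?_ (fun s hs => ?_) (fun s hs => ?_)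
  · rintro x y x' y' hx hy ⟨S, hS, hfS⟩
    exact ⟨S, hS, (image_mono (Icc_subset_Icc hx hy)).trans hfS⟩
  · exact exists_timeAxis_image_Icc_right hcont horder hs
  · exact exists_timeAxis_image_Icc_left hcont horder hs
end
end

section
/- The family 𝔅^T = {C^T(x) ∩ B_ε(x) : x ∈ M, ε > 0} of bounded time cones in Minkowski space is a topological basis: it covers M, and for any two members S1, S2 of 𝔅^T and any point p ∈ S1 ∩ S2, there is a member S of 𝔅^T with p ∈ S ⊆ S1 ∩ S2; hence 𝔅^T is a base of the topology Z^T it generates. -/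
noncomputable section

open TopologicalSpace Filter

lemma isOpen_eball (x : Mink) (ε : ℝ) : IsOpen (eball x ε) := by
  have hc : Continuous fun y : Mink => Real.sqrt ((y.1 - x.1) ^ 2 + ‖y.2 - x.2‖ ^ 2) := by
    fun_prop
  exact isOpen_lt hc continuous_const

lemma isOpen_chron_fwd (x : Mink) : IsOpen {y : Mink | Chron x y} := by
  have : {y : Mink | Chron x y} = {y : Mink | ‖y.2 - x.2‖ < y.1 - x.1} := rfl
  rw [this]
  exact isOpen_lt (by fun_prop) (by fun_prop)

lemma isOpen_chron_bwd (x : Mink) : IsOpen {y : Mink | Chron y x} := by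
  have : {y : Mink | Chron y x} = {y : Mink | ‖x.2 - y.2‖ < x.1 - y.1} := rfl
  rw [this]
  exact isOpen_lt (by fun_prop) (by fun_prop)

lemma eball_subset_metric_ball (q : Mink) (r : ℝ) : eball q r ⊆ Metric.ball q r := by
  intro y hy
  have hy' : Real.sqrt ((y.1 - q.1) ^ 2 + ‖y.2 - q.2‖ ^ 2) < r := hy
  rw [Metric.mem_ball, Prod.dist_eq, max_lt_iff]
  constructor
  · calc dist y.1 q.1 = |y.1 - q.1| := Real.dist_eq _ _
      _ = Real.sqrt ((y.1 - q.1) ^ 2) := (Real.sqrt_sq_eq_abs _).symm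
      _ ≤ Real.sqrt ((y.1 - q.1) ^ 2 + ‖y.2 - q.2‖ ^ 2) :=
          Real.sqrt_le_sqrt (le_add_of_nonneg_right (sq_nonneg _))
      _ < r := hy'
  · calc dist y.2 q.2 = ‖y.2 - q.2‖ := dist_eq_norm _ _
      _ = Real.sqrt (‖y.2 - q.2‖ ^ 2) := (Real.sqrt_sq (norm_nonneg _)).symm
      _ ≤ Real.sqrt ((y.1 - q.1) ^ 2 + ‖y.2 - q.2‖ ^ 2) :=
          Real.sqrt_le_sqrt (le_add_of_nonneg_left (sq_nonneg _))
      _ < r := hy'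

lemma self_mem_eball (x : Mink) {ε : ℝ} (hε : 0 < ε) : x ∈ eball x ε := by
  show Real.sqrt ((x.1 - x.1) ^ 2 + ‖x.2 - x.2‖ ^ 2) < ε
  simp [hε]

lemma eball_mono (x : Mink) {r s : ℝ} (h : r ≤ s) : eball x r ⊆ eball x s :=
  fun _ hy => lt_of_lt_of_le hy h

lemma refine (x : Mink) (ε : ℝ) (p : Mink) (hp : p ∈ timeCone x ∩ eball x ε) :
    ∃ r > 0, timeCone p ∩ eball p r ⊆ timeCone x ∩ eball x ε := by
  rcases hp with ⟨hp1, hp2⟩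
  rcases hp1 with hpx | hchr
  · -- p = x
    have hpx : p = x := hpx
    obtain ⟨r, hr, hball⟩ := Metric.isOpen_iff.mp (isOpen_eball x ε) p (hpx ▸ hp2)
    refine ⟨r, hr, ?_⟩
    rintro q ⟨hq1, hq2⟩
    exact ⟨hpx ▸ hq1, hball (eball_subset_metric_ball p r hq2)⟩
  · rcases hchr with hxp | hpx
    · -- Chron x p
      have hopen : IsOpen ({y : Mink | Chron x y} ∩ eball x ε) :=
        (isOpen_chron_fwd x).inter (isOpen_eball x ε)
      obtain ⟨r, hr, hball⟩ := Metric.isOpen_iff.mp hopen p ⟨hxp, hp2⟩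
      refine ⟨r, hr, ?_⟩
      rintro q ⟨_, hq2⟩
      have := hball (eball_subset_metric_ball p r hq2)
      exact ⟨Or.inr (Or.inl this.1), this.2⟩
    · -- Chron p x
      have hopen : IsOpen ({y : Mink | Chron y x} ∩ eball x ε) :=
        (isOpen_chron_bwd x).inter (isOpen_eball x ε)
      obtain ⟨r, hr, hball⟩ := Metric.isOpen_iff.mp hopen p ⟨hpx, hp2⟩
      refine ⟨r, hr, ?_⟩
      rintro q ⟨_, hq2⟩
      have := hball (eball_subset_metric_ball p r hq2)
      exact ⟨Or.inr (Or.inr this.1), this.2⟩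

/-- The family of bounded time cones covers `M`, is closed under refinement at points of
intersections, and hence is a topological basis of the topology `Z^T` it generates. -/
theorem boundedTimeCones_isTopologicalBasis :
    ⋃₀ BasisT = Set.univ ∧
    (∀ S1 ∈ BasisT, ∀ S2 ∈ BasisT, ∀ p ∈ S1 ∩ S2, ∃ S ∈ BasisT, p ∈ S ∧ S ⊆ S1 ∩ S2) ∧
    @TopologicalSpace.IsTopologicalBasis Mink ZT BasisT := by
  have hcover : ⋃₀ BasisT = Set.univ := by
    apply Set.eq_univ_of_forall
    intro x
    exact ⟨timeCone x ∩ eball x 1, ⟨x, 1, one_pos, rfl⟩,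
      Or.inl rfl, self_mem_eball x one_pos⟩
  have hinter : ∀ S1 ∈ BasisT, ∀ S2 ∈ BasisT, ∀ p ∈ S1 ∩ S2,
      ∃ S ∈ BasisT, p ∈ S ∧ S ⊆ S1 ∩ S2 := by
    rintro S1 ⟨x, ε, hε, rfl⟩ S2 ⟨y, δ, hδ, rfl⟩ p ⟨hp1, hp2⟩
    obtain ⟨r1, hr1, hsub1⟩ := refine x ε p hp1
    obtain ⟨r2, hr2, hsub2⟩ := refine y δ p hp2
    refine ⟨timeCone p ∩ eball p (min r1 r2),
      ⟨p, min r1 r2, lt_min hr1 hr2, rfl⟩,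
      ⟨Or.inl rfl, self_mem_eball p (lt_min hr1 hr2)⟩, ?_⟩
    intro q hq
    exact ⟨hsub1 ⟨hq.1, eball_mono p (min_le_left _ _) hq.2⟩,
      hsub2 ⟨hq.1, eball_mono p (min_le_right _ _) hq.2⟩⟩
  exact ⟨hcover, hinter, @TopologicalSpace.IsTopologicalBasis.mk Mink ZT BasisT hinter hcover rfl⟩
end
end

section
/- The family 𝔅^S = {C^S(x) ∩ B_ε(x) : x ∈ M, ε > 0} of bounded space cones in Minkowski space is a topological basis, and the topology Z^S it generates equals the intersection topology of T^≪ and the Euclidean topology T_E, i.e. Z^S is the topology generated by the family {V ∩ U : V is T^≪-open, U is T_E-open}. -/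
noncomputable section

open TopologicalSpace Filter

/-! A point `y ≠ x` lies in `C^S(x)` exactly when neither `x ≺ y` nor `y ≺ x`. Hence
`C^S(x) = (M \ (J⁺(x) \ {x})) ∩ (M \ (J⁻(x) \ {x}))` is `T^≪`-open and `C^S(x) \ {x}` is
Euclidean open, so each bounded space cone is a `T^≪`-open set cut with a Euclidean open one.
Conversely, every `p ∈ C^S(x)` has a Euclidean neighbourhood `U` with `C^S(p) ∩ U ⊆ C^S(x)`
(for `p = x` take `U = M`). This gives the basis property, and shows that Euclidean open sets
and the subbasic sets `M \ (J^±(x) \ {x}) = C^S(x) ∪ {y | y is not causally related to x}` of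
`T^≪` are `Z^S`-open. -/

open Set

lemma mem_spaceCone_iff {x y : Mink} :
    y ∈ spaceCone x ↔ y = x ∨ (¬ Causal x y ∧ ¬ Causal y x) := by
  have hr : dspace y x = dspace x y := norm_sub_rev _ _
  have ht : dtime y x = -dtime x y := (neg_sub _ _).symm
  simp only [spaceCone, Causal, mem_union, mem_singleton_iff, mem_ofPred_eq, not_le, hr, ht,
    abs_lt, neg_lt]
  tauto

lemma mem_spaceCone_self (x : Mink) : x ∈ spaceCone x :=
  mem_spaceCone_iff.2 (Or.inl rfl)

lemma spaceCone_eq_inter (x : Mink) :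
    spaceCone x = (univ \ (Jplus x \ {x})) ∩ (univ \ (Jminus x \ {x})) := by
  ext y
  simp only [mem_spaceCone_iff, Jplus, Jminus, mem_inter_iff, Set.mem_sdiff, mem_univ,
    mem_ofPred_eq, mem_singleton_iff, true_and]
  tauto

lemma univ_diff_Jplus_eq (x : Mink) :
    univ \ (Jplus x \ {x}) = spaceCone x ∪ {y | ¬ Causal x y} := by
  ext y
  simp only [mem_spaceCone_iff, Jplus, mem_union, Set.mem_sdiff, mem_univ, mem_ofPred_eq,
    mem_singleton_iff, true_and]
  tauto

lemma univ_diff_Jminus_eq (x : Mink) :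
    univ \ (Jminus x \ {x}) = spaceCone x ∪ {y | ¬ Causal y x} := by
  ext y
  simp only [mem_spaceCone_iff, Jminus, mem_union, Set.mem_sdiff, mem_univ, mem_ofPred_eq,
    mem_singleton_iff, true_and]
  tauto

lemma TE_isOpen_setOf_not_causal_left (x : Mink) : TE.IsOpen {y | ¬ Causal x y} := by
  simp only [Causal, dspace, dtime, not_le]
  exact isOpen_lt (by fun_prop) (by fun_prop)

lemma TE_isOpen_setOf_not_causal_right (x : Mink) : TE.IsOpen {y | ¬ Causal y x} := by
  simp only [Causal, dspace, dtime, not_le]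
  exact isOpen_lt (by fun_prop) (by fun_prop)

lemma TE_isOpen_eball (x : Mink) (ε : ℝ) : TE.IsOpen (eball x ε) :=
  isOpen_lt (by fun_prop) continuous_const

lemma mem_eball_self {x : Mink} {ε : ℝ} (hε : 0 < ε) : x ∈ eball x ε := by
  simpa [eball] using hε

lemma eball_subset_ball (x : Mink) (r : ℝ) : eball x r ⊆ Metric.ball x r := by
  intro y hy
  rw [Metric.mem_ball, Prod.dist_eq, Real.dist_eq, dist_eq_norm]
  refine max_lt (lt_of_le_of_lt (Real.abs_le_sqrt ?_) hy) (lt_of_le_of_lt ?_ hy)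
  · exact le_add_of_nonneg_right (sq_nonneg _)
  · exact Real.le_sqrt_of_sq_le (le_add_of_nonneg_left (sq_nonneg _))

lemma exists_eball_subset {U : Set Mink} {p : Mink} (hU : TE.IsOpen U) (hp : p ∈ U) :
    ∃ δ > 0, eball p δ ⊆ U := by
  obtain ⟨δ, hδ, hball⟩ := Metric.isOpen_iff.1 hU p hp
  exact ⟨δ, hδ, (eball_subset_ball p δ).trans hball⟩

lemma exists_spaceCone_inter_subset_spaceCone {x p : Mink} (hp : p ∈ spaceCone x) :
    ∃ U, TE.IsOpen U ∧ p ∈ U ∧ spaceCone p ∩ U ⊆ spaceCone x := by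
  rcases mem_spaceCone_iff.1 hp with rfl | hpx
  · exact ⟨univ, isOpen_univ, trivial, inter_subset_left⟩
  · exact ⟨{y | ¬ Causal x y} ∩ {y | ¬ Causal y x}, TE.isOpen_inter _ _
      (TE_isOpen_setOf_not_causal_left x) (TE_isOpen_setOf_not_causal_right x), hpx,
      fun y hy => mem_spaceCone_iff.2 (Or.inr hy.2)⟩

lemma exists_basisS_subset {U A : Set Mink} {p : Mink} (hU : TE.IsOpen U) (hp : p ∈ U)
    (hA : spaceCone p ∩ U ⊆ A) : ∃ S ∈ BasisS, p ∈ S ∧ S ⊆ A := by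
  obtain ⟨δ, hδ, hsub⟩ := exists_eball_subset hU hp
  exact ⟨_, ⟨p, δ, hδ, rfl⟩, ⟨mem_spaceCone_self p, mem_eball_self hδ⟩,
    (inter_subset_inter_right _ hsub).trans hA⟩

lemma sUnion_basisS : ⋃₀ BasisS = univ :=
  eq_univ_of_forall fun x =>
    ⟨_, ⟨x, 1, one_pos, rfl⟩, mem_spaceCone_self x, mem_eball_self one_pos⟩

lemma exists_basisS_subset_inter :
    ∀ S₁ ∈ BasisS, ∀ S₂ ∈ BasisS, ∀ p ∈ S₁ ∩ S₂, ∃ S ∈ BasisS, p ∈ S ∧ S ⊆ S₁ ∩ S₂ := by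
  rintro _ ⟨x₁, ε₁, -, rfl⟩ _ ⟨x₂, ε₂, -, rfl⟩ p ⟨⟨hp₁, hb₁⟩, hp₂, hb₂⟩
  obtain ⟨U₁, hU₁, hpU₁, hsub₁⟩ := exists_spaceCone_inter_subset_spaceCone hp₁
  obtain ⟨U₂, hU₂, hpU₂, hsub₂⟩ := exists_spaceCone_inter_subset_spaceCone hp₂
  have hU : TE.IsOpen ((U₁ ∩ eball x₁ ε₁) ∩ (U₂ ∩ eball x₂ ε₂)) :=
    TE.isOpen_inter _ _ (TE.isOpen_inter _ _ hU₁ (TE_isOpen_eball x₁ ε₁))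
      (TE.isOpen_inter _ _ hU₂ (TE_isOpen_eball x₂ ε₂))
  refine exists_basisS_subset hU ⟨⟨hpU₁, hb₁⟩, hpU₂, hb₂⟩ ?_
  rintro y ⟨hy, ⟨hy₁, hyb₁⟩, hy₂, hyb₂⟩
  exact ⟨⟨hsub₁ ⟨hy, hy₁⟩, hyb₁⟩, hsub₂ ⟨hy, hy₂⟩, hyb₂⟩

theorem isTopologicalBasis_basisS : @IsTopologicalBasis Mink ZS BasisS :=
  @IsTopologicalBasis.mk Mink ZS BasisS exists_basisS_subset_inter sUnion_basisS rfl

lemma ZS_isOpen_of_forall {A : Set Mink}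
    (h : ∀ p ∈ A, ∃ U, TE.IsOpen U ∧ p ∈ U ∧ spaceCone p ∩ U ⊆ A) : ZS.IsOpen A :=
  (isTopologicalBasis_basisS.isOpen_iff (t := ZS)).2 fun p hp =>
    let ⟨_, hU, hpU, hA⟩ := h p hp
    exists_basisS_subset hU hpU hA

lemma ZS_le_TE : ZS ≤ TE := fun U hU =>
  ZS_isOpen_of_forall fun _ hp => ⟨U, hU, hp, inter_subset_right⟩

lemma ZS_isOpen_spaceCone (x : Mink) : ZS.IsOpen (spaceCone x) :=
  ZS_isOpen_of_forall fun _ hp => exists_spaceCone_inter_subset_spaceCone hp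

lemma ZS_le_Tll : ZS ≤ Tll := by
  refine le_generateFrom ?_
  rintro _ (⟨x, rfl⟩ | ⟨x, rfl⟩)
  · rw [univ_diff_Jplus_eq]
    exact @IsOpen.union Mink _ _ ZS (ZS_isOpen_spaceCone x)
      (ZS_le_TE _ (TE_isOpen_setOf_not_causal_left x))
  · rw [univ_diff_Jminus_eq]
    exact @IsOpen.union Mink _ _ ZS (ZS_isOpen_spaceCone x)
      (ZS_le_TE _ (TE_isOpen_setOf_not_causal_right x))

lemma Tll_isOpen_spaceCone (x : Mink) : Tll.IsOpen (spaceCone x) := by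
  rw [spaceCone_eq_inter]
  exact .inter _ _ (.basic _ (Or.inl ⟨x, rfl⟩)) (.basic _ (Or.inr ⟨x, rfl⟩))

/-- The family of bounded space cones is a topological basis, and the topology `Z^S` it
generates equals the intersection topology of `T^≪` and the Euclidean topology. -/
theorem boundedSpaceCones_basis_and_ZS_eq_intersection :
    (⋃₀ BasisS = Set.univ ∧
      ∀ S1 ∈ BasisS, ∀ S2 ∈ BasisS, ∀ p ∈ S1 ∩ S2, ∃ S ∈ BasisS, p ∈ S ∧ S ⊆ S1 ∩ S2) ∧
    ZS = TopologicalSpace.generateFrom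
      {S : Set Mink | ∃ V U : Set Mink, Tll.IsOpen V ∧ TE.IsOpen U ∧ S = V ∩ U} := by
  refine ⟨⟨sUnion_basisS, exists_basisS_subset_inter⟩,
    le_antisymm (le_generateFrom ?_) (le_generateFrom ?_)⟩
  · rintro _ ⟨V, U, hV, hU, rfl⟩
    exact ZS.isOpen_inter V U (ZS_le_Tll V hV) (ZS_le_TE U hU)
  · rintro _ ⟨x, ε, -, rfl⟩
    exact .basic _ ⟨_, _, Tll_isOpen_spaceCone x, TE_isOpen_eball x ε, rfl⟩
end
end

section
/- The Limit Curve Theorem fails for the path topology Z^T on Minkowski space: there exist a sequence (γ_n) of endless causal curves, points x_n in the range of γ_n, and a point x ∈ M with x_n → x in the Euclidean topology T_E, such that no endless causal curve whose range contains x is a Z^T-limit curve of (γ_n). -/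
noncomputable section

open TopologicalSpace Filter

/-!
The light rays `t ↦ (t, e₀/(n+1) + t e₁)` pass through points `(0, e₀/(n+1))` converging to the
origin, yet each of them is spacelike separated from the origin at every point, since
`‖e₀/(n+1) + t e₁‖² = (n+1)⁻² + t² > t²`. So none of them meets the bounded time cone of the
origin, a `Z^T`-neighbourhood of it, and no sequence of their points `Z^T`-converges to the origin.
-/

open scoped RealInnerProductSpace

def causalLine (a u : EuclideanSpace ℝ (Fin 3)) (t : ℝ) : Mink := (t, a + t • u)

lemma endlessCausalCurve_causalLine (a : EuclideanSpace ℝ (Fin 3))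
    {u : EuclideanSpace ℝ (Fin 3)} (hu : ‖u‖ ≤ 1) : EndlessCausalCurve (causalLine a u) := by
  refine ⟨by unfold causalLine; fun_prop, fun s t hst => ⟨?_, ?_⟩,
    fun c => ⟨c + 1, by simp [causalLine]⟩, fun c => ⟨c - 1, by simp [causalLine]⟩⟩
  · have hdiff : a + t • u - (a + s • u) = (t - s) • u := by rw [sub_smul]; abel
    calc dspace (causalLine a u s) (causalLine a u t) = (t - s) * ‖u‖ := by
          simp only [dspace, causalLine, hdiff, norm_smul, Real.norm_eq_abs,
            abs_of_pos (sub_pos.mpr hst)]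
      _ ≤ t - s := mul_le_of_le_one_right (sub_pos.mpr hst).le hu
      _ = dtime (causalLine a u s) (causalLine a u t) := rfl
  · intro h
    exact hst.ne (congrArg Prod.fst h)

lemma not_mem_timeCone_of_abs_dtime_lt_dspace {x y : Mink} (h : |dtime x y| < dspace x y) :
    y ∉ timeCone x := by
  rintro (rfl | hc | hc)
  · simp [dtime, dspace] at h
  · exact (le_abs_self _).not_gt (h.trans hc)
  · have hsymm : dspace y x = dspace x y := by rw [dspace, dspace, norm_sub_rev]
    have hdt : dtime y x = -dtime x y := by rw [dtime, dtime, neg_sub]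
    rw [Chron, hsymm, hdt] at hc
    exact (neg_le_abs _).not_gt (h.trans hc)

lemma abs_lt_norm_add_smul {E : Type*} [NormedAddCommGroup E] [InnerProductSpace ℝ E]
    {a u : E} (ha : a ≠ 0) (hu : ‖u‖ = 1)
    (hau : ⟪a, u⟫ = 0) (t : ℝ) : |t| < ‖a + t • u‖ := by
  have hsq : ‖a + t • u‖ ^ 2 = ‖a‖ ^ 2 + t ^ 2 := by
    rw [norm_add_sq_real, inner_smul_right, hau, norm_smul, hu, Real.norm_eq_abs, mul_one, sq_abs]
    ring
  have ha' : 0 < ‖a‖ := norm_pos_iff.mpr ha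
  exact abs_lt_of_sq_lt_sq (by rw [hsq]; linarith [pow_pos ha' 2]) (norm_nonneg _)

lemma range_causalLine_disjoint_timeCone {a u : EuclideanSpace ℝ (Fin 3)} (ha : a ≠ 0)
    (hu : ‖u‖ = 1) (hau : ⟪a, u⟫ = 0) : Disjoint (Set.range (causalLine a u)) (timeCone 0) := by
  rw [Set.disjoint_left]
  rintro _ ⟨t, rfl⟩
  refine not_mem_timeCone_of_abs_dtime_lt_dspace ?_
  simpa [dtime, dspace, causalLine] using abs_lt_norm_add_smul ha hu hau t

lemma timeCone_mem_nhds_ZT (x : Mink) : timeCone x ∈ @nhds Mink ZT x := by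
  have hopen : @IsOpen Mink ZT (timeCone x ∩ eball x 1) :=
    TopologicalSpace.GenerateOpen.basic _ ⟨x, 1, one_pos, rfl⟩
  have hx : x ∈ timeCone x ∩ eball x 1 := ⟨Or.inl rfl, by simp [eball]⟩
  exact Filter.mem_of_superset (@IsOpen.mem_nhds Mink ZT _ _ hopen hx) Set.inter_subset_left

lemma not_isLimitCurve_of_disjoint_nhds (T : TopologicalSpace Mink) {γ : ℝ → Mink}
    {γs : ℕ → ℝ → Mink} {p : Mink} {s : Set Mink} (hp : p ∈ Set.range γ)
    (hs : s ∈ @nhds Mink T p) (hγs : ∀ n, Disjoint (Set.range (γs n)) s) :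
    ¬ IsLimitCurve T γ γs := by
  rintro ⟨nk, -, hlim⟩
  obtain ⟨pk, hpk, htendsto⟩ := hlim p hp
  obtain ⟨k, hk⟩ := (htendsto.eventually hs).exists
  exact Set.disjoint_left.mp (hγs (nk k)) (hpk k) hk

/-- The Limit Curve Theorem fails for the path topology `Z^T` on Minkowski space. -/
theorem LCT_fails_for_ZT :
    ∃ (γs : ℕ → ℝ → Mink) (xs : ℕ → Mink) (x : Mink),
      (∀ n, EndlessCausalCurve (γs n)) ∧
      (∀ n, xs n ∈ Set.range (γs n)) ∧
      Filter.Tendsto xs Filter.atTop (@nhds Mink TE x) ∧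
      ∀ γ : ℝ → Mink, EndlessCausalCurve γ → x ∈ Set.range γ →
        ¬ IsLimitCurve ZT γ γs := by
  set e₀ : EuclideanSpace ℝ (Fin 3) := EuclideanSpace.single 0 1
  set e₁ : EuclideanSpace ℝ (Fin 3) := EuclideanSpace.single 1 1
  have he₁ : ‖e₁‖ = 1 := by simp [e₁]
  have horth : ⟪e₀, e₁⟫ = 0 := by simp [e₀, e₁, EuclideanSpace.inner_single_left]
  set a : ℕ → EuclideanSpace ℝ (Fin 3) := fun n => ((n : ℝ) + 1)⁻¹ • e₀
  have ha : ∀ n, a n ≠ 0 := fun n => smul_ne_zero (by positivity) (by simp [e₀])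
  have ha_tendsto : Tendsto a atTop (nhds 0) := by
    simpa [a, one_div] using (tendsto_one_div_add_atTop_nhds_zero_nat (𝕜 := ℝ)).smul_const e₀
  refine ⟨fun n => causalLine (a n) e₁, fun n => causalLine (a n) e₁ 0, 0,
    fun n => endlessCausalCurve_causalLine _ he₁.le, fun n => ⟨0, rfl⟩, ?_,
    fun γ _ hγ => not_isLimitCurve_of_disjoint_nhds ZT hγ (timeCone_mem_nhds_ZT 0)
      fun n => range_causalLine_disjoint_timeCone (ha n) he₁ (by simp [a, inner_smul_left, horth])⟩
  rw [← Prod.mk_zero_zero]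
  exact tendsto_const_nhds.prodMk_nhds (by simpa [causalLine] using ha_tendsto)
end
end
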